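/- Suppose among k reals ṽ_1,…,ṽ_k, at most q₁ ≤ b < k/2 are arbitrary and the rest are correct values v_1,…,v_{k−q₁} with mean v̄. Then (Trmean_b({ṽ_i}) − v̄)² ≤ (2(k−q₁)(k+b−q₁)/(k−b−q₁)²) · (1/(k−q₁))∑_{i∈[k−q₁]}(v_i − v̄)², where Trmean_b is the b-trimmed mean (1/(k−2b))∑_{i=b+1}^{k−b} ṽ_{i:k}. -/

import Mathlib

open Finset

/-- The `i`-th smallest element (0-indexed) of the tuple `v`. -/
noncomputable def ordStat {k : ℕ} (v : Fin k → ℝ) (i : Fin k) : ℝ :=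
  v (Tuple.sort v i)

/-- The `b`-trimmed mean of `k` reals. -/
noncomputable def trmean {k : ℕ} (b : ℕ) (v : Fin k → ℝ) : ℝ :=
  (∑ i : Fin k, if b ≤ (i : ℕ) ∧ (i : ℕ) < k - b then ordStat v i else 0) /
    ((k : ℝ) - 2 * b)

/-! Let `w₀ ≤ ⋯ ≤ w_{n-1}` be the sorted correct values (`n = k - q₁`) and `dⱼ = wⱼ - v̄`, so that
`∑ dⱼ = 0`. As only `q₁` entries are corrupted, the `j`-th smallest entry overall lies between
`w_{j-q₁}` and `wⱼ`; hence the trimmed mean lies between the means of the blocks `w_{[b-q₁, n-b)}`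
and `w_{[b, k-b)}`. For a monotone sequence the mean of a block is at most the mean of the block
together with everything to its right, which for the upper block is `-(d₀ + ⋯ + d_{b-1}) / (n - b)`;
symmetrically for the lower block. By Cauchy–Schwarz each of these `b`-term tail sums has square at
most `b ∑ dⱼ²`, so `(Trmean_b - v̄)² ≤ b ∑ dⱼ² / (n - b)²`, which is stronger than the claim. -/

theorem ordStat_le_of_lt_card_filter {k : ℕ} (f : Fin k → ℝ) (i : Fin k) (t : ℝ)
    (h : (i : ℕ) < #{j | f j ≤ t}) : ordStat f i ≤ t := by
  by_contra! hlt
  have hmaps : ∀ j ∈ ({j | f j ≤ t} : Finset (Fin k)), (Tuple.sort f).symm j ∈ Iio i := by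
    intro j hj
    rw [mem_filter] at hj
    rw [mem_Iio]
    by_contra! hij
    have := Tuple.monotone_sort f hij
    simp only [Function.comp_apply, Equiv.apply_symm_apply] at this
    exact (this.trans hj.2).not_gt hlt
  have := card_le_card_of_injOn _ hmaps (Tuple.sort f).symm.injective.injOn
  rw [Fin.card_Iio] at this
  omega

theorem le_ordStat_of_le_card_filter {k : ℕ} (f : Fin k → ℝ) (i : Fin k) (t : ℝ)
    (h : k - i ≤ #{j | t ≤ f j}) : t ≤ ordStat f i := by
  by_contra! hlt
  have hmaps : ∀ j ∈ ({j | t ≤ f j} : Finset (Fin k)), (Tuple.sort f).symm j ∈ Ioi i := by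
    intro j hj
    rw [mem_filter] at hj
    rw [mem_Ioi]
    by_contra! hij
    have := Tuple.monotone_sort f hij
    simp only [Function.comp_apply, Equiv.apply_symm_apply] at this
    exact (hj.2.trans this).not_gt hlt
  have := card_le_card_of_injOn _ hmaps (Tuple.sort f).symm.injective.injOn
  rw [Fin.card_Ioi] at this
  omega

/-- `ordStat v` extended by `0` to a sequence on `ℕ`, so that index ranges are `Finset.Ico`s. -/
noncomputable def ordStatSeq {n : ℕ} (v : Fin n → ℝ) (j : ℕ) : ℝ :=
  if h : j < n then ordStat v ⟨j, h⟩ else 0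

theorem ordStatSeq_of_lt {n : ℕ} (v : Fin n → ℝ) {j : ℕ} (h : j < n) :
    ordStatSeq v j = ordStat v ⟨j, h⟩ :=
  dif_pos h

theorem monotoneOn_ordStatSeq_sub {n : ℕ} (v : Fin n → ℝ) (c : ℝ) :
    MonotoneOn (fun j => ordStatSeq v j - c) (Set.Iio n) := by
  intro i hi j hj hij
  dsimp only
  rw [ordStatSeq_of_lt v hi, ordStatSeq_of_lt v hj]
  exact sub_le_sub_right (Tuple.monotone_sort v (Fin.mk_le_mk.mpr hij)) c

theorem sum_range_ordStatSeq {n : ℕ} (v : Fin n → ℝ) (g : ℝ → ℝ) :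
    ∑ j ∈ range n, g (ordStatSeq v j) = ∑ i, g (v i) := by
  rw [← Fin.sum_univ_eq_sum_range (fun j => g (ordStatSeq v j))]
  simp only [ordStatSeq_of_lt v (Fin.is_lt _), Fin.eta, ordStat]
  exact Equiv.sum_comp (Tuple.sort v) (g ∘ v)

theorem trmean_eq_sum_Ico_div {k : ℕ} (b : ℕ) (vt : Fin k → ℝ) :
    trmean b vt = (∑ j ∈ Ico b (k - b), ordStatSeq vt j) / ((k : ℝ) - 2 * b) := by
  have hterm : ∀ i : Fin k, (if b ≤ (i : ℕ) ∧ (i : ℕ) < k - b then ordStat vt i else 0) =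
      if b ≤ (i : ℕ) ∧ (i : ℕ) < k - b then ordStatSeq vt i else 0 := fun i => by
    rw [ordStatSeq_of_lt vt i.is_lt]
  have hIco : ({j ∈ range k | b ≤ j ∧ j < k - b} : Finset ℕ) = Ico b (k - b) := by
    ext j
    simp only [mem_filter, mem_range, mem_Ico]
    omega
  rw [trmean, sum_congr rfl fun i _ => hterm i,
    Fin.sum_univ_eq_sum_range (fun j => if b ≤ j ∧ j < k - b then ordStatSeq vt j else 0),
    ← sum_filter, hIco]

theorem mul_trmean_sub_eq_sum_Ico {k : ℕ} {b : ℕ} (hbk : 2 * b < k) (vt : Fin k → ℝ) (c : ℝ) :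
    ((k : ℝ) - 2 * b) * (trmean b vt - c) = ∑ j ∈ Ico b (k - b), (ordStatSeq vt j - c) := by
  have hk : ((k - b - b : ℕ) : ℝ) = (k : ℝ) - 2 * b := by
    rw [Nat.cast_sub (by omega), Nat.cast_sub (by omega)]
    ring
  have hne : (k : ℝ) - 2 * b ≠ 0 := by rw [← hk]; exact_mod_cast (by omega : k - b - b ≠ 0)
  rw [trmean_eq_sum_Ico_div, sum_sub_distrib, sum_const, Nat.card_Ico, nsmul_eq_mul, hk]
  field_simp

theorem card_nsmul_sum_le_card_nsmul_sum {ι M : Type*} [AddCommMonoid M] [PartialOrder M]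
    [IsOrderedAddMonoid M] {s t : Finset ι} {f : ι → M} (h : ∀ i ∈ s, ∀ j ∈ t, f i ≤ f j) :
    #t • ∑ i ∈ s, f i ≤ #s • ∑ j ∈ t, f j :=
  calc #t • ∑ i ∈ s, f i = ∑ i ∈ s, ∑ _j ∈ t, f i := by simp only [sum_const, smul_sum]
    _ ≤ ∑ _i ∈ s, ∑ j ∈ t, f j := sum_le_sum fun i hi => sum_le_sum fun j hj => h i hi j hj
    _ = #s • ∑ j ∈ t, f j := sum_const _

section MonotoneBlocks

variable {d : ℕ → ℝ} {l m r : ℕ}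

theorem MonotoneOn.card_mul_sum_Ico_le (hd : MonotoneOn d (Set.Ico l r)) (hlm : l ≤ m)
    (hmr : m ≤ r) :
    ((r : ℝ) - m) * ∑ j ∈ Ico l m, d j ≤ ((m : ℝ) - l) * ∑ j ∈ Ico m r, d j := by
  have h := card_nsmul_sum_le_card_nsmul_sum (s := Ico l m) (t := Ico m r) (f := d)
    fun i hi j hj => by
      rw [mem_Ico] at hi hj
      exact hd ⟨hi.1, by omega⟩ ⟨by omega, hj.2⟩ (by omega)
  rwa [nsmul_eq_mul, nsmul_eq_mul, Nat.card_Ico, Nat.card_Ico, Nat.cast_sub hmr,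
    Nat.cast_sub hlm] at h

theorem MonotoneOn.mul_sum_Ico_le_left (hd : MonotoneOn d (Set.Ico l r)) (hlm : l ≤ m)
    (hmr : m ≤ r) :
    ((r : ℝ) - l) * ∑ j ∈ Ico l m, d j ≤ ((m : ℝ) - l) * ∑ j ∈ Ico l r, d j := by
  rw [← sum_Ico_consecutive d hlm hmr]
  linarith [hd.card_mul_sum_Ico_le hlm hmr]

theorem MonotoneOn.mul_sum_Ico_le_right (hd : MonotoneOn d (Set.Ico l r)) (hlm : l ≤ m)
    (hmr : m ≤ r) :
    ((r : ℝ) - m) * ∑ j ∈ Ico l r, d j ≤ ((r : ℝ) - l) * ∑ j ∈ Ico m r, d j := by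
  rw [← sum_Ico_consecutive d hlm hmr]
  linarith [hd.card_mul_sum_Ico_le hlm hmr]

end MonotoneBlocks

theorem sq_sum_le_card_mul_sum_sq_of_subset {ι : Type*} {s t : Finset ι} (hst : s ⊆ t)
    (f : ι → ℝ) : (∑ i ∈ s, f i) ^ 2 ≤ #s * ∑ i ∈ t, f i ^ 2 := by
  refine sq_sum_le_card_mul_sum_sq.trans (mul_le_mul_of_nonneg_left ?_ (Nat.cast_nonneg _))
  exact sum_le_sum_of_subset_of_nonneg hst fun _ _ _ => sq_nonneg _

theorem sq_le_of_neg_le_of_le {x a b M : ℝ} (hbx : -b ≤ x) (hxa : x ≤ a) (ha : a ^ 2 ≤ M)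
    (hb : b ^ 2 ≤ M) : x ^ 2 ≤ M := by
  rcases le_total 0 x with hx | hx <;> nlinarith

section Subfamily

variable {k n : ℕ} {vt : Fin k → ℝ} {v : Fin n → ℝ} {ι : Fin n → Fin k}

theorem ordStat_le_ordStat_of_injective (hι : Function.Injective ι)
    (hv : ∀ p, vt (ι p) = v p) (i : Fin n) (j : Fin k) (hji : (j : ℕ) ≤ i) :
    ordStat vt j ≤ ordStat v i := by
  apply ordStat_le_of_lt_card_filter
  have hmaps : ∀ p ∈ Iic i, ι (Tuple.sort v p) ∈ ({j | vt j ≤ ordStat v i} : Finset (Fin k)) :=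
    fun p hp => by
      rw [mem_filter, hv]
      exact ⟨mem_univ _, Tuple.monotone_sort v (mem_Iic.mp hp)⟩
  have := card_le_card_of_injOn _ hmaps ((hι.comp (Tuple.sort v).injective).injOn)
  rw [Fin.card_Iic] at this
  omega

theorem ordStat_le_ordStat_of_injective_of_add_le (hι : Function.Injective ι)
    (hv : ∀ p, vt (ι p) = v p) (i : Fin n) (j : Fin k) (hij : (i : ℕ) + (k - n) ≤ j) :
    ordStat v i ≤ ordStat vt j := by
  apply le_ordStat_of_le_card_filter
  have hmaps : ∀ p ∈ Ici i, ι (Tuple.sort v p) ∈ ({j | ordStat v i ≤ vt j} : Finset (Fin k)) :=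
    fun p hp => by
      rw [mem_filter, hv]
      exact ⟨mem_univ _, Tuple.monotone_sort v (mem_Ici.mp hp)⟩
  have := card_le_card_of_injOn _ hmaps ((hι.comp (Tuple.sort v).injective).injOn)
  rw [Fin.card_Ici] at this
  have := Fin.le_of_injective ι hι
  omega

theorem ordStatSeq_le_ordStatSeq (hι : Function.Injective ι) (hv : ∀ p, vt (ι p) = v p)
    {j : ℕ} (hj : j < n) : ordStatSeq vt j ≤ ordStatSeq v j := by
  have hnk : n ≤ k := Fin.le_of_injective ι hι
  rw [ordStatSeq_of_lt vt (by omega), ordStatSeq_of_lt v hj]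
  exact ordStat_le_ordStat_of_injective hι hv _ _ le_rfl

theorem ordStatSeq_le_ordStatSeq_add (hι : Function.Injective ι) (hv : ∀ p, vt (ι p) = v p)
    {j : ℕ} (hj : j < n) : ordStatSeq v j ≤ ordStatSeq vt (j + (k - n)) := by
  have hnk : n ≤ k := Fin.le_of_injective ι hι
  rw [ordStatSeq_of_lt vt (by omega), ordStatSeq_of_lt v hj]
  exact ordStat_le_ordStat_of_injective_of_add_le hι hv _ _ le_rfl

variable {b : ℕ} {vbar : ℝ}

theorem sub_mul_trmean_sub_le_neg_sum_range (hι : Function.Injective ι) (hv : ∀ p, vt (ι p) = v p)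
    (hnb : k - n ≤ b) (hbk : 2 * b < k) (hmean : ∑ i, (v i - vbar) = 0) :
    ((n : ℝ) - b) * (trmean b vt - vbar) ≤ -∑ j ∈ range b, (ordStatSeq v j - vbar) := by
  have hnk : n ≤ k := Fin.le_of_injective ι hι
  have hc : (0 : ℝ) < k - 2 * b := by
    rw [sub_pos]; exact_mod_cast hbk
  have htail : ∑ j ∈ Ico b n, (ordStatSeq v j - vbar) =
      -∑ j ∈ range b, (ordStatSeq v j - vbar) := by
    rw [eq_neg_iff_add_eq_zero, add_comm, sum_range_add_sum_Ico _ (by omega),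
      sum_range_ordStatSeq v (· - vbar), hmean]
  refine le_of_mul_le_mul_left ?_ hc
  calc ((k : ℝ) - 2 * b) * (((n : ℝ) - b) * (trmean b vt - vbar))
      = ((n : ℝ) - b) * ∑ j ∈ Ico b (k - b), (ordStatSeq vt j - vbar) := by
        rw [← mul_trmean_sub_eq_sum_Ico hbk]; ring
    _ ≤ ((n : ℝ) - b) * ∑ j ∈ Ico b (k - b), (ordStatSeq v j - vbar) := by
        gcongr with j hj
        · exact sub_nonneg.mpr (by exact_mod_cast (by omega : b ≤ n))
        · exact ordStatSeq_le_ordStatSeq hι hv (by rw [mem_Ico] at hj; omega)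
    _ ≤ (((k - b : ℕ) : ℝ) - b) * ∑ j ∈ Ico b n, (ordStatSeq v j - vbar) :=
        ((monotoneOn_ordStatSeq_sub v vbar).mono Set.Ico_subset_Iio_self).mul_sum_Ico_le_left
          (by omega) (by omega)
    _ = ((k : ℝ) - 2 * b) * -∑ j ∈ range b, (ordStatSeq v j - vbar) := by
        rw [htail, Nat.cast_sub (by omega)]; ring

theorem neg_sum_Ico_le_sub_mul_trmean_sub (hι : Function.Injective ι) (hv : ∀ p, vt (ι p) = v p)
    (hnb : k - n ≤ b) (hbk : 2 * b < k) (hmean : ∑ i, (v i - vbar) = 0) :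
    -∑ j ∈ Ico (n - b) n, (ordStatSeq v j - vbar) ≤ ((n : ℝ) - b) * (trmean b vt - vbar) := by
  have hnk : n ≤ k := Fin.le_of_injective ι hι
  have hc : (0 : ℝ) < k - 2 * b := by
    rw [sub_pos]; exact_mod_cast hbk
  have hhead : ∑ j ∈ range (n - b), (ordStatSeq v j - vbar) =
      -∑ j ∈ Ico (n - b) n, (ordStatSeq v j - vbar) := by
    rw [eq_neg_iff_add_eq_zero, sum_range_add_sum_Ico _ (by omega),
      sum_range_ordStatSeq v (· - vbar), hmean]
  have hshift : ∑ j ∈ Ico b (k - b), (ordStatSeq vt j - vbar) =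
      ∑ j ∈ Ico (b - (k - n)) (n - b), (ordStatSeq vt (j + (k - n)) - vbar) := by
    rw [sum_Ico_add' (fun j => ordStatSeq vt j - vbar), Nat.sub_add_cancel hnb,
      show n - b + (k - n) = k - b by omega]
  have hmono : MonotoneOn (fun j => ordStatSeq v j - vbar) (Set.Ico 0 (n - b)) :=
    (monotoneOn_ordStatSeq_sub v vbar).mono
      (Set.Ico_subset_Iio_self.trans (Set.Iio_subset_Iio (by omega)))
  refine le_of_mul_le_mul_left ?_ hc
  calc ((k : ℝ) - 2 * b) * -∑ j ∈ Ico (n - b) n, (ordStatSeq v j - vbar)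
      = (((n - b : ℕ) : ℝ) - (b - (k - n) : ℕ)) * ∑ j ∈ Ico 0 (n - b), (ordStatSeq v j - vbar) := by
        rw [← range_eq_Ico, hhead, Nat.cast_sub (by omega), Nat.cast_sub hnb, Nat.cast_sub hnk]
        ring
    _ ≤ (((n - b : ℕ) : ℝ) - (0 : ℕ)) * ∑ j ∈ Ico (b - (k - n)) (n - b), (ordStatSeq v j - vbar) :=
        hmono.mul_sum_Ico_le_right (m := b - (k - n)) (Nat.zero_le _) (by omega)
    _ ≤ ((n : ℝ) - b) * ∑ j ∈ Ico (b - (k - n)) (n - b), (ordStatSeq vt (j + (k - n)) - vbar) := by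
        rw [Nat.cast_zero, sub_zero, Nat.cast_sub (by omega)]
        gcongr with j hj
        · exact sub_nonneg.mpr (by exact_mod_cast (by omega : b ≤ n))
        · exact ordStatSeq_le_ordStatSeq_add hι hv (by rw [mem_Ico] at hj; omega)
    _ = ((k : ℝ) - 2 * b) * (((n : ℝ) - b) * (trmean b vt - vbar)) := by
        rw [← hshift, ← mul_trmean_sub_eq_sum_Ico hbk]; ring

theorem sq_trmean_sub_le (hι : Function.Injective ι) (hv : ∀ p, vt (ι p) = v p)
    (hnb : k - n ≤ b) (hbk : 2 * b < k) (hmean : ∑ i, (v i - vbar) = 0) :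
    (trmean b vt - vbar) ^ 2 ≤ (b * ∑ i, (v i - vbar) ^ 2) / ((n : ℝ) - b) ^ 2 := by
  have hnk : n ≤ k := Fin.le_of_injective ι hι
  have hm : (0 : ℝ) < n - b := by
    rw [sub_pos]; exact_mod_cast (by omega : b < n)
  have hvar := sum_range_ordStatSeq v (fun x => (x - vbar) ^ 2)
  have hlow := sq_sum_le_card_mul_sum_sq_of_subset (range_subset_range.mpr (by omega : b ≤ n))
    (fun j => ordStatSeq v j - vbar)
  have hhigh := sq_sum_le_card_mul_sum_sq_of_subset (s := Ico (n - b) n) (t := range n)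
    (fun j => by simp only [mem_Ico, mem_range]; omega) (fun j => ordStatSeq v j - vbar)
  rw [card_range, hvar] at hlow
  rw [Nat.card_Ico, Nat.sub_sub_self (by omega), hvar] at hhigh
  rw [le_div_iff₀ (by positivity), ← mul_pow, mul_comm]
  exact sq_le_of_neg_le_of_le (neg_sum_Ico_le_sub_mul_trmean_sub hι hv hnb hbk hmean)
    (sub_mul_trmean_sub_le_neg_sum_range hι hv hnb hbk hmean) (by rw [neg_sq]; exact hlow) hhigh

end Subfamily

/-- robustness of the trimmed mean: the squared distance between the
`b`-trimmed mean of the (partially poisoned) sequence and the mean of the correct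
values is bounded by the empirical variance of the correct values scaled by
`2(k-q₁)(k+b-q₁)/(k-b-q₁)²`. -/
theorem trimmed_mean_robustness
    (k q₁ b : ℕ) (hq₁b : q₁ ≤ b) (hbk : 2 * b < k)
    (vt : Fin k → ℝ)                 -- the full (possibly poisoned) sequence
    (v : Fin (k - q₁) → ℝ)           -- the correct values
    (ι : Fin (k - q₁) → Fin k)       -- where the correct values sit
    (hι : Function.Injective ι)
    (hcorrect : ∀ j, vt (ι j) = v j)
    (vbar : ℝ) (hvbar : vbar = (1 / ((k : ℝ) - q₁)) * ∑ i, v i) :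
    (trmean b vt - vbar) ^ 2 ≤
      (2 * ((k : ℝ) - q₁) * ((k : ℝ) + b - q₁) / ((k : ℝ) - b - q₁) ^ 2) *
        ((1 / ((k : ℝ) - q₁)) * ∑ i, (v i - vbar) ^ 2) := by
  have hn : ((k - q₁ : ℕ) : ℝ) = k - q₁ := Nat.cast_sub (by omega)
  have hn0 : (k : ℝ) - q₁ ≠ 0 := by rw [← hn]; exact_mod_cast (by omega : k - q₁ ≠ 0)
  have hmean : ∑ i, (v i - vbar) = 0 := by
    rw [sum_sub_distrib, sum_const, card_univ, Fintype.card_fin, nsmul_eq_mul, hvbar, hn]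
    field_simp
    ring
  have hkey := sq_trmean_sub_le hι hcorrect (by omega) hbk hmean
  rw [hn, show (k : ℝ) - q₁ - b = k - b - q₁ by ring] at hkey
  calc (trmean b vt - vbar) ^ 2 ≤ (b * ∑ i, (v i - vbar) ^ 2) / ((k : ℝ) - b - q₁) ^ 2 := hkey
    _ ≤ (2 * ((k : ℝ) + b - q₁) * ∑ i, (v i - vbar) ^ 2) / ((k : ℝ) - b - q₁) ^ 2 := by
      gcongr ?_ * _ / _
      linarith [(Nat.cast_le (α := ℝ)).mpr (by omega : q₁ ≤ k)]
    _ = _ := by field_simp
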